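/- For all complex numbers a, b, c with a ≠ i and a ≠ -i, the identity (1/(a + i) - 1/(i - a))·(b - a² - 1)·(c - a² - 1) + 2a·(b + c - a² - 1) = 2abc/(a² + 1) holds. Consequently, a smooth ℂ-valued function u = u_0(x,y) satisfies the n = 0 equation of the lattice u_{n,xy} = α_n(u_{n,x} - u_n² - 1)(u_{n,y} - u_n² - 1) + 2u_n(u_{n,x} + u_{n,y} - u_n² - 1), α_n = 1/(u_n - u_{n-1}) - 1/(u_{n+1} - u_n), with u_1 = i and u_{-1} = -i, if and only if it satisfies u_xy = 2u·u_x·u_y/(u² + 1). -/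
import Mathlib


noncomputable section

open Complex

/-- `∂/∂x` for a complex-valued function of `(x, y)`. -/
def dx2 (f : ℝ → ℝ → ℂ) : ℝ → ℝ → ℂ := fun x y => deriv (fun s => f s y) x

/-- `∂/∂y` for a complex-valued function of `(x, y)`. -/
def dy2 (f : ℝ → ℝ → ℂ) : ℝ → ℝ → ℂ := fun x y => deriv (fun s => f x s) y

/-- For all `a, b, c ∈ ℂ` with `a ≠ i` and `a ≠ -i`,
`(1/(a+i) - 1/(i-a)) (b - a² - 1)(c - a² - 1) + 2a (b + c - a² - 1) = 2abc/(a² + 1)`.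
Consequently, a smooth `u = u₀(x,y)` satisfies the `n = 0` equation of the lattice with
`u₁ = i`, `u₋₁ = -i` if and only if `u_xy = 2 u u_x u_y / (u² + 1)`. -/
theorem stmt14 :
    (∀ a b c : ℂ, a ≠ I → a ≠ -I →
      (1 / (a + I) - 1 / (I - a)) * (b - a ^ 2 - 1) * (c - a ^ 2 - 1)
          + 2 * a * (b + c - a ^ 2 - 1)
        = 2 * a * b * c / (a ^ 2 + 1)) ∧
    (∀ u : ℝ → ℝ → ℂ, ContDiff ℝ (⊤ : ℕ∞) ↿u →
      (∀ x y, u x y ≠ I) → (∀ x y, u x y ≠ -I) →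
      ((∀ x y, dx2 (dy2 u) x y
          = (1 / (u x y + I) - 1 / (I - u x y))
              * (dx2 u x y - (u x y) ^ 2 - 1) * (dy2 u x y - (u x y) ^ 2 - 1)
            + 2 * u x y * (dx2 u x y + dy2 u x y - (u x y) ^ 2 - 1)) ↔
        (∀ x y, dx2 (dy2 u) x y
          = 2 * u x y * dx2 u x y * dy2 u x y / ((u x y) ^ 2 + 1)))) := by

  have key : ∀ a b c : ℂ, a ≠ I → a ≠ -I →
      (1 / (a + I) - 1 / (I - a)) * (b - a ^ 2 - 1) * (c - a ^ 2 - 1)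
          + 2 * a * (b + c - a ^ 2 - 1)
        = 2 * a * b * c / (a ^ 2 + 1) := by
    intro a b c h1 h2
    have hI : a + I ≠ 0 := by
      intro h; apply h2; linear_combination h
    have hI2 : I - a ≠ 0 := by
      intro h; apply h1; linear_combination -h
    have hsq : a ^ 2 + 1 ≠ 0 := by
      intro h
      apply hI
      rcases mul_eq_zero.mp (show (a + I) * (a - I) = 0 by
        linear_combination h - Complex.I_sq) with h' | h'
      · exact h'
      · exact absurd (by linear_combination h') h1
    field_simp
    linear_combination (-(2*a) + 2*a*b + 2*a*c - 4*a^3 + 2*a^3*b + 2*a^3*c - 2*a^5 - 2*a*b*c) * Complex.I_sq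
  refine ⟨key, fun u _ h1 h2 => ⟨fun H x y => ?_, fun H x y => ?_⟩⟩
  · rw [H x y, key (u x y) (dx2 u x y) (dy2 u x y) (h1 x y) (h2 x y)]
  · rw [H x y, key (u x y) (dx2 u x y) (dy2 u x y) (h1 x y) (h2 x y)]
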